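/- arXiv:math/0210380 — 7 statements merged into one kernel-verified Lean document; each statement's English description precedes it below -/
import Mathlib

section
/- Let G be a Schmidt group, i.e., a non-nilpotent finite group all of whose proper subgroups are nilpotent, with G = G' ⋊ ⟨b⟩ where G' is a p-group and ⟨b⟩ is cyclic of order q^v (p, q distinct primes), and let x be the projection of G onto ⟨b⟩ along G'. Then the only endomorphism z of G with xz = z and zx = 0 is z = 0 (the trivial endomorphism). -/
/-- Let `G` be a Schmidt group (non-nilpotent finite group all of whose proper
subgroups are nilpotent) with `G = G' ⋊ ⟨b⟩`, `G'` a `p`-group and `b` of order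
`q^v`, and let `x` be the projection of `G` onto `⟨b⟩` along `G'`. Then the only
endomorphism `z` of `G` with `xz = z` and `zx = 0` is `z = 0`.
(Maps on the right: `xz = z` means `z ∘ x = z`; `zx = 0` means `x ∘ z = 0`.) -/
theorem stmt_6 {G : Type*} [Group G] [Finite G]
    (hnn : ¬ Group.IsNilpotent G)
    (hprop : ∀ H : Subgroup G, H ≠ ⊤ → Group.IsNilpotent H)
    (p q : ℕ) (hp : p.Prime) (hq : q.Prime) (hpq : p ≠ q)
    (v : ℕ) (hv : 1 ≤ v) (b : G) (hb : orderOf b = q ^ v)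
    (hG' : IsPGroup p (commutator G))
    (hsup : commutator G ⊔ Subgroup.zpowers b = ⊤)
    (hinf : commutator G ⊓ Subgroup.zpowers b = ⊥)
    (x : G →* G) (hxx : x.comp x = x)
    (hker : x.ker = commutator G) (hrange : x.range = Subgroup.zpowers b)
    (z : G →* G) (h1 : z.comp x = z) (h2 : ∀ g : G, x (z g) = 1) :
    ∀ g : G, z g = 1 := by
  -- z b = 1: z b lies in commutator G (a p-group) and has order dividing q^v
  have hzb : z b = 1 := by
    have hmem : z b ∈ commutator G := by
      rw [← hker]; exact h2 b
    obtain ⟨k, hk⟩ := hG' ⟨z b, hmem⟩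
    have hk' : (z b) ^ p ^ k = 1 := by
      have := congrArg (Subtype.val) hk
      simpa using this
    have hdvd1 : orderOf (z b) ∣ p ^ k := orderOf_dvd_of_pow_eq_one hk'
    have hdvd2 : orderOf (z b) ∣ q ^ v := by
      rw [← hb]; exact orderOf_map_dvd z b
    have h1' : orderOf (z b) = 1 := by
      rcases (Nat.dvd_prime_pow hp).mp hdvd1 with ⟨i, hi, hoi⟩
      rcases (Nat.dvd_prime_pow hq).mp hdvd2 with ⟨j, hj, hoj⟩
      by_contra hne
      have hi0 : i ≠ 0 := by rintro rfl; simp [hoi] at hne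
      have : p ∣ q ^ j := by
        rw [← hoj, hoi]; exact dvd_pow_self p hi0
      have := (Nat.Prime.dvd_of_dvd_pow hp this)
      exact hpq ((Nat.prime_dvd_prime_iff_eq hp hq).mp this)
    exact orderOf_eq_one_iff.mp h1'
  intro g
  have hg : z g = z (x g) := by
    conv_lhs => rw [← h1]
    rfl
  have : x g ∈ Subgroup.zpowers b := by
    rw [← hrange]; exact ⟨g, rfl⟩
  obtain ⟨n, hn⟩ := this
  rw [hg, ← hn, map_zpow, hzb, one_zpow]
end

section
/- Let G be a finite group, x an idempotent endomorphism of G with Im x = ⟨b⟩ cyclic of order q^v a Sylow q-subgroup of G, and suppose the only endomorphism z with xz = z and zx = 0 is z = 0. Then Ker x contains no element of order q, i.e. Ker x is a q'-group. -/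
/-- Let `G` be a finite group, `x` an idempotent endomorphism with `Im x = ⟨b⟩`
cyclic of order `q^v`, a Sylow `q`-subgroup of `G`. If the only endomorphism `z`
with `xz = z` and `zx = 0` is `z = 0`, then `Ker x` contains no element of order
`q`, i.e. `Ker x` is a `q'`-group. -/
theorem stmt_7 {G : Type*} [Group G] [Finite G]
    (q : ℕ) (hq : q.Prime) (v : ℕ) (hv : 1 ≤ v)
    (x : G →* G) (hxx : x.comp x = x)
    (b : G) (hb : orderOf b = q ^ v) (hrange : x.range = Subgroup.zpowers b)
    (hsyl : ∃ S : Sylow q G, (S : Subgroup G) = x.range)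
    (hH : ∀ z : G →* G, z.comp x = z → (∀ g : G, x (z g) = 1) →
      ∀ g : G, z g = 1) :
    (∀ g : G, g ∈ x.ker → orderOf g ≠ q) ∧ ¬ q ∣ Nat.card ↥x.ker := by
  obtain ⟨S, hS⟩ := hsyl
  have hfact : Fact q.Prime := ⟨hq⟩
  -- card of the range is q^v
  have hcardrange : Nat.card x.range = q ^ v := by
    rw [hrange, Nat.card_zpowers, hb]
  -- card range = q ^ multiplicity
  have hmult : Nat.card x.range = q ^ (Nat.card G).factorization q := by
    rw [← hS, Sylow.card_eq_multiplicity]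
  have hv' : v = (Nat.card G).factorization q := by
    have := hmult.symm.trans hcardrange
    exact (Nat.pow_right_injective hq.two_le this).symm
  -- |G| = |G/ker| * |ker|, |G/ker| = |range|
  have hcardG : Nat.card G = Nat.card x.range * Nat.card x.ker := by
    rw [Subgroup.card_eq_card_quotient_mul_card_subgroup x.ker]
    congr 1
    exact Nat.card_congr (QuotientGroup.quotientKerEquivRange x).toEquiv
  have hnd : ¬ q ∣ Nat.card ↥x.ker := by
    intro hdvd
    have h1 : q ^ (v + 1) ∣ Nat.card G := by
      rw [hcardG, hcardrange, pow_succ, mul_comm (q ^ v) q, mul_comm (q ^ v)]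
      exact mul_dvd_mul hdvd dvd_rfl
    rw [hv'] at h1
    exact Nat.pow_succ_factorization_not_dvd
      (Nat.card_pos (α := G)).ne' hq h1
  refine ⟨?_, hnd⟩
  intro g hg hord
  apply hnd
  have : orderOf (⟨g, hg⟩ : x.ker) = q := by
    rw [Subgroup.orderOf_mk, hord]
  rw [← this]
  exact orderOf_dvd_natCard _
end

section
/- Let G be a finite group, x an idempotent endomorphism with Im x a Sylow q-subgroup of G and Im x abelian. If y is an idempotent endomorphism of G with xy = y and yx = x (composition on the right), then y = x·ĝ for some g ∈ Ker x. -/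
open Pointwise


/-- Let `G` be a finite group and `x` an idempotent endomorphism whose image is an
abelian Sylow `q`-subgroup of `G`. If `y` is an idempotent endomorphism with
`xy = y` and `yx = x` (maps on the right, so `y ∘ x = y` and `x ∘ y = x`), then
`y = x·ĝ` for some `g ∈ Ker x`, where `ĝ : a ↦ g⁻¹ a g`. -/
theorem stmt_9 {G : Type*} [Group G] [Finite G]
    (q : ℕ) (hq : q.Prime) (x : G →* G) (hx : x.comp x = x)
    (hsyl : ∃ S : Sylow q G, (S : Subgroup G) = x.range)
    (hab : ∀ a b : G, a ∈ x.range → b ∈ x.range → a * b = b * a)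
    (y : G →* G) (hy : y.comp y = y)
    (h1 : y.comp x = y) (h2 : x.comp y = x) :
    ∃ g : G, g ∈ x.ker ∧ y = (MulAut.conj g⁻¹).toMonoidHom.comp x := by
  haveI := Fact.mk hq
  obtain ⟨S', hS'⟩ := hsyl
  have hxx : ∀ a, x (x a) = x a := fun a => DFunLike.congr_fun hx a
  have hyy : ∀ a, y (y a) = y a := fun a => DFunLike.congr_fun hy a
  have h1' : ∀ a, y (x a) = y a := fun a => DFunLike.congr_fun h1 a
  have h2' : ∀ a, x (y a) = x a := fun a => DFunLike.congr_fun h2 a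
  -- y is the identity on its range
  have hidT : ∀ t ∈ y.range, y t = t := by
    rintro t ⟨a, rfl⟩; exact hyy a
  -- the restriction of x to y.range, with values in x.range
  have hpS : IsPGroup q (x.range : Subgroup G) := hS' ▸ S'.2
  let φ : (y.range : Subgroup G) →* (x.range : Subgroup G) :=
    x.rangeRestrict.comp y.range.subtype
  have hφinj : Function.Injective φ := by
    rintro ⟨t₁, ht₁⟩ ⟨t₂, ht₂⟩ h
    have hxe : x t₁ = x t₂ := congrArg Subtype.val h
    have : y t₁ = y t₂ := by rw [← h1' t₁, ← h1' t₂, hxe]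
    exact Subtype.ext ((hidT t₁ ht₁).symm.trans (this.trans (hidT t₂ ht₂)))
  have hφsurj : Function.Surjective φ := by
    rintro ⟨s, a, rfl⟩
    exact ⟨⟨y a, a, rfl⟩, Subtype.ext (h2' a)⟩
  have hpT : IsPGroup q (y.range : Subgroup G) := hpS.of_injective φ hφinj
  obtain ⟨T', hle⟩ := hpT.exists_le_sylow
  obtain ⟨h, hsmul⟩ := MulAction.exists_smul_eq G S' T'
  -- cardinalities
  have hcard1 : Nat.card (y.range : Subgroup G) = Nat.card (x.range : Subgroup G) :=
    Nat.card_congr (Equiv.ofBijective φ ⟨hφinj, hφsurj⟩)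
  have hcard2 : Nat.card ((h • S' : Sylow q G) : Subgroup G) = Nat.card (S' : Subgroup G) :=
    (Nat.card_congr (S'.equivSMul h).toEquiv).symm
  have hcardT : Nat.card ((T' : Sylow q G) : Subgroup G) ≤ Nat.card (y.range : Subgroup G) := by
    rw [← hsmul, hcard2, hcard1, hS']
  have hTeq : y.range = (T' : Subgroup G) := Subgroup.eq_of_le_of_card_ge hle hcardT
  -- y.range = (MulAut.conj h) • x.range
  have hrange : y.range = MulAut.conj h • (x.range : Subgroup G) := by
    rw [hTeq, ← hsmul, Sylow.smul_def, Sylow.pointwise_smul_def, hS']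
  -- the conjugating element
  refine ⟨x h * h⁻¹, ?_, ?_⟩
  · show x (x h * h⁻¹) = 1
    rw [map_mul, map_inv, hxx, mul_inv_cancel]
  · have hg1 : y (x h * h⁻¹) = 1 := by
      have : x (x h * h⁻¹) = 1 := by rw [map_mul, map_inv, hxx, mul_inv_cancel]
      rw [← h1' (x h * h⁻¹), this, map_one]
    ext a
    have hmem : (x h * h⁻¹)⁻¹ * x a * (x h * h⁻¹) ∈ y.range := by
      rw [hrange]
      have : (x h * h⁻¹)⁻¹ * x a * (x h * h⁻¹)
          = MulAut.conj h • ((x h)⁻¹ * x a * x h) := by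
        simp [MulAut.conj, mul_assoc]
      rw [this]
      exact Subgroup.smul_mem_pointwise_smul _ _ _
        (mul_mem (mul_mem (inv_mem ⟨h, rfl⟩) ⟨a, rfl⟩) ⟨h, rfl⟩)
    have key : y a = (x h * h⁻¹)⁻¹ * x a * (x h * h⁻¹) := by
      have := hidT _ hmem
      rw [map_mul, map_mul, map_inv, hg1, inv_one, one_mul, mul_one, h1' a] at this
      exact this
    simpa [MulAut.conj, mul_assoc] using key
end

section
/- Let p, q be distinct primes, v ≥ 1, and let P = H ⋊ ⟨d⟩ be a finite group where H is an abelian p-group, d has order q^v, d^q ∈ Z(P), P is non-abelian, and for every nontrivial h ∈ H one has P = ⟨h, d⟩. Then every proper subgroup of P is abelian (i.e., P is a Miller–Moreno group). -/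
/-- Let `p ≠ q` be primes, `v ≥ 1`, and `P = H ⋊ ⟨d⟩` a finite non-abelian group
with `H` an abelian normal `p`-subgroup, `d` of order `q^v`, `d^q ∈ Z(P)`, and
`P = ⟨h, d⟩` for every nontrivial `h ∈ H`. Then every proper subgroup of `P` is
abelian (so `P` is a Miller–Moreno group). -/
theorem stmt_11 {P : Type*} [Group P] [Finite P]
    (p q : ℕ) (hp : p.Prime) (hq : q.Prime) (hpq : p ≠ q) (v : ℕ) (hv : 1 ≤ v)
    (H : Subgroup P) (hHnorm : H.Normal) (hHp : IsPGroup p H)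
    (hHab : ∀ a b : P, a ∈ H → b ∈ H → a * b = b * a)
    (d : P) (hd : orderOf d = q ^ v)
    (hinf : H ⊓ Subgroup.zpowers d = ⊥) (hsup : H ⊔ Subgroup.zpowers d = ⊤)
    (hdq : d ^ q ∈ Subgroup.center P)
    (hnonab : ∃ a b : P, a * b ≠ b * a)
    (hgen : ∀ h : P, h ∈ H → h ≠ 1 → Subgroup.closure {h, d} = ⊤) :
    ∀ N : Subgroup P, N ≠ ⊤ → ∀ a b : P, a ∈ N → b ∈ N → a * b = b * a := by
  -- decomposition of any element of P
  have hdec : ∀ x : P, ∃ h ∈ H, ∃ k : ℤ, x = h * d ^ k := by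
    intro x
    have hx : x ∈ ((H ⊔ Subgroup.zpowers d : Subgroup P) : Set P) := by
      rw [hsup]; trivial
    rw [Subgroup.normal_mul] at hx
    obtain ⟨h, hh, y, hy, hxy⟩ := hx
    obtain ⟨k, rfl⟩ := hy
    exact ⟨h, hh, k, hxy.symm⟩
  have hdqv : d ^ (q ^ v : ℕ) = 1 := by rw [← hd, pow_orderOf_eq_one]
  intro N hN a b ha hb
  by_cases htriv : ∀ x : P, x ∈ N → x ∈ H → x = 1
  · -- N ∩ H trivial : use that P/H is abelian
    set f := QuotientGroup.mk' H with hf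
    have hfd : ∀ x : P, ∀ h ∈ H, ∀ k : ℤ, x = h * d ^ k → f x = (f d) ^ k := by
      intro x h hh k hx
      rw [hx, map_mul, map_zpow, QuotientGroup.mk'_apply,
        (QuotientGroup.eq_one_iff h).2 hh, one_mul]
    obtain ⟨h₁, hh₁, k₁, hx₁⟩ := hdec a
    obtain ⟨h₂, hh₂, k₂, hx₂⟩ := hdec b
    have hfab : f (b * a) = f (a * b) := by
      rw [map_mul, map_mul, hfd a h₁ hh₁ k₁ hx₁, hfd b h₂ hh₂ k₂ hx₂,
        ← zpow_add, ← zpow_add, add_comm]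
    have hmem : (b * a)⁻¹ * (a * b) ∈ H := by
      rw [← QuotientGroup.eq]
      exact hfab
    have h1 : (b * a)⁻¹ * (a * b) = 1 :=
      htriv _ (N.mul_mem (N.inv_mem (N.mul_mem hb ha)) (N.mul_mem ha hb)) hmem
    exact (inv_mul_eq_one.mp h1).symm
  · push_neg at htriv
    obtain ⟨h₀, h₀N, h₀H, h₀ne⟩ := htriv
    -- claim: every element of N lies in H ⊔ zpowers (d^q)
    have key : ∀ x ∈ N, ∃ h ∈ H, ∃ m : ℤ, x = h * (d ^ q) ^ m := by
      intro x hxN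
      obtain ⟨h, hh, k, hx⟩ := hdec x
      by_cases hqk : (q : ℤ) ∣ k
      · obtain ⟨m, rfl⟩ := hqk
        exact ⟨h, hh, m, by rw [hx, ← zpow_natCast d q, ← zpow_mul]⟩
      · -- derive N = ⊤, contradiction
        exfalso
        have hdk : d ^ k ∈ H ⊔ N := by
          have : d ^ k = h⁻¹ * x := by rw [hx]; group
          rw [this]
          exact Subgroup.mul_mem _ (Subgroup.mem_sup_left (H.inv_mem hh))
            (Subgroup.mem_sup_right hxN)
        -- coprimality: d ∈ zpowers (d^k) up to H ⊔ N
        have hcop : IsCoprime ((q : ℤ) ^ v) k := by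
          refine IsCoprime.pow_left ?_
          exact (Nat.prime_iff_prime_int.mp hq).coprime_iff_not_dvd.2 hqk
        obtain ⟨A, B, hAB⟩ := hcop
        have hdmem : d ∈ H ⊔ N := by
          have h1 : k * B + (q : ℤ) ^ v * A = 1 := by linarith [hAB]
          have : d = (d ^ k) ^ B * (d ^ ((q : ℤ) ^ v)) ^ A := by
            rw [← zpow_mul, ← zpow_mul, ← zpow_add, h1, zpow_one]
          rw [this]
          have hdq1 : d ^ ((q : ℤ) ^ v) = 1 := by
            rw [← zpow_natCast d (q ^ v)] at hdqv
            push_cast at hdqv ⊢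
            exact hdqv
          rw [hdq1, one_zpow, mul_one]
          exact Subgroup.zpow_mem _ hdk B
        have hHN : H ⊔ N = ⊤ := by
          rw [eq_top_iff, ← hsup, sup_le_iff]
          exact ⟨le_sup_left, fun y hy => by
            obtain ⟨n, rfl⟩ := hy; exact Subgroup.zpow_mem _ hdmem n⟩
        -- K := H ⊓ N is normal in P
        have hKnorm : (H ⊓ N).Normal := by
          constructor
          intro g hg c
          have hc : c ∈ ((H ⊔ N : Subgroup P) : Set P) := by rw [hHN]; trivial
          rw [Subgroup.normal_mul] at hc
          obtain ⟨h', hh', n', hn', rfl⟩ := hc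
          have h1 : n' * g * n'⁻¹ ∈ H ⊓ N :=
            ⟨hHnorm.conj_mem g hg.1 n', N.mul_mem (N.mul_mem hn' hg.2) (N.inv_mem hn')⟩
          have h2 : h' * (n' * g * n'⁻¹) * h'⁻¹ = n' * g * n'⁻¹ := by
            rw [hHab h' (n' * g * n'⁻¹) hh' h1.1, mul_assoc, mul_inv_cancel, mul_one]
          have : h' * n' * g * (h' * n')⁻¹ = h' * (n' * g * n'⁻¹) * h'⁻¹ := by group
          rw [this, h2]
          exact h1
        -- top = closure {h₀, d} ≤ (H ⊓ N) ⊔ zpowers d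
        have htop : (⊤ : Subgroup P) ≤ (H ⊓ N) ⊔ Subgroup.zpowers d := by
          rw [← hgen h₀ h₀H h₀ne]
          refine Subgroup.closure_le _ |>.2 ?_
          rintro y (rfl | rfl)
          · exact Subgroup.mem_sup_left ⟨h₀H, h₀N⟩
          · exact Subgroup.mem_sup_right (Subgroup.mem_zpowers _)
        -- hence H ≤ N
        have hHleN : H ≤ N := by
          intro y hy
          have : y ∈ (((H ⊓ N) ⊔ Subgroup.zpowers d : Subgroup P) : Set P) :=
            htop (Subgroup.mem_top y)
          rw [Subgroup.normal_mul] at this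
          obtain ⟨c, hc, z, hz, rfl⟩ := this
          have hzH : z ∈ H := by
            have : z = c⁻¹ * (c * z) := by group
            rw [this]
            exact H.mul_mem (H.inv_mem hc.1) hy
          have : z ∈ H ⊓ Subgroup.zpowers d := ⟨hzH, hz⟩
          rw [hinf] at this
          rw [Subgroup.mem_bot] at this
          rw [this]
          simpa using hc.2
        have : N = ⊤ := by rw [← hHN, sup_eq_right.2 hHleN]
        exact hN this
    -- now both a and b are in the abelian group H ⊔ zpowers (d^q)
    obtain ⟨h₁, hh₁, m₁, rfl⟩ := key a ha
    obtain ⟨h₂, hh₂, m₂, rfl⟩ := key b hb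
    have hc : ∀ m : ℤ, ∀ g : P, g * (d ^ q) ^ m = (d ^ q) ^ m * g := by
      intro m g
      have : (d ^ q) ^ m ∈ Subgroup.center P := Subgroup.zpow_mem _ hdq m
      exact Subgroup.mem_center_iff.1 this g
    have key2 : ∀ (g u : P) (m n : ℤ),
        g * (d ^ q) ^ m * (u * (d ^ q) ^ n) = (g * u) * (d ^ q) ^ (m + n) := by
      intro g u m n
      rw [← mul_assoc, mul_assoc g, ← hc m u, ← mul_assoc g u, mul_assoc (g * u), ← zpow_add]
    rw [key2, key2, hHab h₁ h₂ hh₁ hh₂, add_comm m₁ m₂]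
end

section
/- Let p, q be distinct primes, v ≥ 1, and let P = H ⋊ ⟨d⟩ be a finite non-nilpotent group where H is a p-group, d has order q^v, d^q ∈ Z(P), C_H(d) ⊆ Z(P), and for every h ∈ H with h ∉ C_H(d) one has P = ⟨h, d⟩. Then every proper subgroup of P is nilpotent (i.e., P is a Schmidt group). -/
/-!
Let `N < P`. If `N ⊓ H` is central, then `N` is abelian, being cyclic modulo a central subgroup
(`N / (N ⊓ H)` embeds in the cyclic group `P / H`). Otherwise `N` contains some `g ∈ H` outside
the centre. If `N ⊔ H = P`, then `q ^ v = |P : H|` divides `|N|`, so `N` contains a Sylow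
`q`-subgroup of `P`, that is, a conjugate `c d c⁻¹`; conjugating the generation hypothesis by `c`
shows that `g` and `c d c⁻¹` generate `P`, which is impossible. Hence `N ⊔ H < P`, and since
`P / H` is cyclic of order `q ^ v` this forces `N ≤ H ⊔ ⟨d ^ q⟩`, a nilpotent group because
`d ^ q` is central.
-/

open Subgroup

namespace Subgroup

variable {G : Type*} [Group G]

theorem isNilpotent_sup_of_commute {H K : Subgroup G} [Group.IsNilpotent H]
    [Group.IsNilpotent K] (hHK : ∀ h ∈ H, ∀ k ∈ K, Commute h k) :
    Group.IsNilpotent ↥(H ⊔ K) := by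
  have comm : ∀ (h : H) (k : K), Commute (H.subtype h) (K.subtype k) :=
    fun h k => hHK h h.2 k k.2
  have hrange := MonoidHom.noncommCoprod_range _ _ comm
  rw [range_subtype, range_subtype] at hrange
  exact hrange ▸ Group.nilpotent_of_surjective _
    (MonoidHom.noncommCoprod _ _ comm).rangeRestrict_surjective

theorem isNilpotent_of_le {N M : Subgroup G} [Group.IsNilpotent M] (h : N ≤ M) :
    Group.IsNilpotent N :=
  (Group.isNilpotent_congr (subgroupOfEquivOfLe h)).mp inferInstance

theorem isCyclic_quotient_of_sup_zpowers_eq_top {H : Subgroup G} [H.Normal] {d : G}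
    (h : H ⊔ zpowers d = ⊤) : IsCyclic (G ⧸ H) := by
  have := congrArg (map (QuotientGroup.mk' H)) h
  rw [map_sup, map_top_of_surjective _ (QuotientGroup.mk'_surjective H), MonoidHom.map_zpowers,
    QuotientGroup.map_mk'_self, bot_sup_eq] at this
  exact isCyclic_iff_exists_zpowers_eq_top.mpr ⟨_, this⟩

theorem isNilpotent_of_inf_le_center {H N : Subgroup G} [H.Normal] [IsCyclic (G ⧸ H)]
    (h : N ⊓ H ≤ center G) : Group.IsNilpotent N := by
  let f := (QuotientGroup.mk' H).comp N.subtype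
  have hker : f.ker ≤ center N := fun n hn =>
    mem_center_iff.mpr fun m => Subtype.ext <|
      mem_center_iff.mp (h ⟨n.2, (QuotientGroup.eq_one_iff _).mp hn⟩) m
  let _ : CommGroup N := commGroupOfCyclicCenterQuotient f hker
  exact CommGroup.isNilpotent

theorem index_dvd_card_of_sup_eq_top {H K : Subgroup G} [H.Normal] (h : K ⊔ H = ⊤) :
    H.index ∣ Nat.card K := by
  rw [← relIndex_top_right H, ← h, relIndex_sup_right]
  exact H.relIndex_dvd_card K

theorem mem_zpowers_zpow_of_not_dvd {q v : ℕ} (hq : q.Prime) {d : G} (hd : orderOf d = q ^ v)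
    {k : ℤ} (hk : ¬ (q : ℤ) ∣ k) : d ∈ zpowers (d ^ k) := by
  obtain ⟨a, b, hab⟩ : IsCoprime k ((q : ℤ) ^ v) :=
    ((Nat.prime_iff_prime_int.mp hq).coprime_iff_not_dvd.mpr hk).symm.pow_right
  have hdq : d ^ ((q : ℤ) ^ v) = 1 := by exact_mod_cast hd ▸ pow_orderOf_eq_one d
  refine mem_zpowers_iff.mpr ⟨a, ?_⟩
  calc (d ^ k) ^ a = d ^ (a * k + b * (q : ℤ) ^ v) := by
        rw [zpow_add, mul_comm b, zpow_mul d _ b, hdq, one_zpow, mul_one, ← zpow_mul, mul_comm]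
    _ = d := by rw [hab, zpow_one]

theorem le_sup_zpowers_pow_or_sup_eq_top {H : Subgroup G} [H.Normal] {q v : ℕ} (hq : q.Prime)
    {d : G} (hd : orderOf d = q ^ v) (hsup : H ⊔ zpowers d = ⊤) (K : Subgroup G) :
    K ≤ H ⊔ zpowers (d ^ q) ∨ K ⊔ H = ⊤ := by
  refine or_iff_not_imp_left.mpr fun hK => ?_
  obtain ⟨x, hxK, hxM⟩ := SetLike.not_le_iff_exists.mp hK
  have hx : x ∈ (↑(H ⊔ zpowers d) : Set G) := by rw [hsup]; trivial
  rw [normal_mul] at hx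
  obtain ⟨h, hh, _, ⟨k, rfl⟩, rfl⟩ := hx
  simp only at hxK hxM
  have hk : ¬ (q : ℤ) ∣ k := by
    rintro ⟨j, rfl⟩
    exact hxM (mul_mem (mem_sup_left hh)
      (mem_sup_right (mem_zpowers_iff.mpr ⟨j, by rw [zpow_mul, zpow_natCast]⟩)))
  have hdk : d ^ k ∈ K ⊔ H := by
    simpa using mul_mem (mem_sup_right (inv_mem hh)) (mem_sup_left hxK)
  rw [eq_top_iff, ← hsup, sup_le_iff, zpowers_le]
  exact ⟨le_sup_right, zpowers_le.mpr hdk (mem_zpowers_zpow_of_not_dvd hq hd hk)⟩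

theorem exists_conj_mem_of_pow_dvd_card [Finite G] {q v : ℕ} [Fact q.Prime] {d : G}
    (hd : orderOf d = q ^ v) (hindex : ¬ q ∣ (zpowers d).index) {N : Subgroup G}
    (hN : q ^ v ∣ Nat.card N) : ∃ c : G, c * d * c⁻¹ ∈ N := by
  obtain ⟨K, hK⟩ := Sylow.exists_subgroup_card_pow_prime q hN
  have hcard : Nat.card (K.map N.subtype) = q ^ v := by
    rw [← hK]; exact card_map_of_injective N.subtype_injective
  have hKindex : (K.map N.subtype).index = (zpowers d).index := by
    have h1 := (K.map N.subtype).index_mul_card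
    rw [hcard, ← hd, ← Nat.card_zpowers, ← (zpowers d).index_mul_card] at h1
    exact Nat.eq_of_mul_eq_mul_right Nat.card_pos h1
  let S : Sylow q G := (IsPGroup.of_card hcard).toSylow (hKindex ▸ hindex)
  let T : Sylow q G := (IsPGroup.of_card (hd ▸ Nat.card_zpowers d)).toSylow hindex
  obtain ⟨c, hc⟩ := MulAction.exists_smul_eq G T S
  have hdT : MulAut.conj c • d ∈ ((c • T : Sylow q G) : Subgroup G) := by
    rw [Sylow.coe_subgroup_smul]
    exact smul_mem_pointwise_smul _ _ _ (by simp [T])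
  rw [hc] at hdT
  exact ⟨c, map_subtype_le K hdT⟩

theorem closure_pair_conj_eq_top {a b : G} (h : closure {a, b} = ⊤) (c : G) :
    closure {c * a * c⁻¹, c * b * c⁻¹} = ⊤ := by
  have := congrArg (map (MulAut.conj c).toMonoidHom) h
  rwa [MonoidHom.map_closure, map_top_of_surjective _ (MulEquiv.surjective _),
    Set.image_pair] at this

theorem eq_top_of_mem_of_conj_mem {H N : Subgroup G} [H.Normal] {d : G}
    (hcent : ∀ h ∈ H, h * d = d * h → h ∈ center G)
    (hgen : ∀ h ∈ H, h * d ≠ d * h → closure {h, d} = ⊤)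
    {g c : G} (hgN : g ∈ N) (hgH : g ∈ H) (hgZ : g ∉ center G) (hc : c * d * c⁻¹ ∈ N) :
    N = ⊤ := by
  have hH : c⁻¹ * g * c ∈ H := by simpa using Normal.conj_mem ‹_› g hgH c⁻¹
  have hnc : c⁻¹ * g * c * d ≠ d * (c⁻¹ * g * c) := fun hcomm => hgZ <| by
    simpa [mul_assoc] using Normal.conj_mem inferInstance _ (hcent _ hH hcomm) c
  have htop := closure_pair_conj_eq_top (hgen _ hH hnc) c
  rw [show c * (c⁻¹ * g * c) * c⁻¹ = g by group] at htop
  rw [eq_top_iff, ← htop, closure_le]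
  exact Set.insert_subset hgN (Set.singleton_subset_iff.mpr hc)

end Subgroup

theorem stmt_12_general {P : Type*} [Group P] [Finite P]
    (p q : ℕ) (hp : p.Prime) (hq : q.Prime) (hpq : p ≠ q) (v : ℕ)
    (H : Subgroup P) (hHnorm : H.Normal) (hHp : IsPGroup p H)
    (d : P) (hd : orderOf d = q ^ v)
    (hinf : H ⊓ Subgroup.zpowers d = ⊥) (hsup : H ⊔ Subgroup.zpowers d = ⊤)
    (hdq : d ^ q ∈ Subgroup.center P)
    (hcent : ∀ h : P, h ∈ H → h * d = d * h → h ∈ Subgroup.center P)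
    (hgen : ∀ h : P, h ∈ H → h * d ≠ d * h → Subgroup.closure {h, d} = ⊤) :
    ∀ N : Subgroup P, N ≠ ⊤ → Group.IsNilpotent N := by
  intro N hN
  have := Fact.mk hp
  have := Fact.mk hq
  have hcompl : IsComplement' H (zpowers d) := isComplement'_of_disjoint_and_mul_eq_univ
    (disjoint_iff.mpr hinf) (by rw [← normal_mul, hsup]; rfl)
  by_cases hcase : N ⊓ H ≤ center P
  · have := isCyclic_quotient_of_sup_zpowers_eq_top hsup
    exact isNilpotent_of_inf_le_center hcase
  obtain ⟨g, ⟨hgN, hgH⟩, hgZ⟩ := SetLike.not_le_iff_exists.mp hcase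
  have hNM : N ≤ H ⊔ zpowers (d ^ q) := by
    refine (le_sup_zpowers_pow_or_sup_eq_top hq hd hsup N).resolve_right fun hNH => hN ?_
    have hindex : ¬ q ∣ (zpowers d).index := by
      obtain ⟨a, ha⟩ := IsPGroup.iff_card.mp hHp
      rw [hcompl.index_eq_card, ha]
      exact fun hdvd => hpq ((Nat.prime_dvd_prime_iff_eq hq hp).mp (hq.dvd_of_dvd_pow hdvd)).symm
    have hcard : q ^ v ∣ Nat.card N := by
      rw [← hd, ← Nat.card_zpowers, ← hcompl.symm.index_eq_card]
      exact index_dvd_card_of_sup_eq_top hNH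
    obtain ⟨c, hc⟩ := exists_conj_mem_of_pow_dvd_card hd hindex hcard
    exact eq_top_of_mem_of_conj_mem hcent hgen hgN hgH hgZ hc
  have := hHp.isNilpotent
  have : Group.IsNilpotent (zpowers (d ^ q)) :=
    let _ := IsCyclic.commGroup (α := zpowers (d ^ q))
    CommGroup.isNilpotent
  have : Group.IsNilpotent ↥(H ⊔ zpowers (d ^ q)) :=
    isNilpotent_sup_of_commute fun h _ k hk => mem_center_iff.mp (zpowers_le.mpr hdq hk) h
  exact isNilpotent_of_le hNM

/-- Let `p ≠ q` be primes, `v ≥ 1`, and `P = H ⋊ ⟨d⟩` a finite non-nilpotent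
group with `H` a normal `p`-subgroup, `d` of order `q^v`, `d^q ∈ Z(P)`,
`C_H(d) ⊆ Z(P)`, and `P = ⟨h, d⟩` for every `h ∈ H` with `h ∉ C_H(d)`. Then
every proper subgroup of `P` is nilpotent (so `P` is a Schmidt group). -/
theorem stmt_12 {P : Type*} [Group P] [Finite P]
    (p q : ℕ) (hp : p.Prime) (hq : q.Prime) (hpq : p ≠ q) (v : ℕ) (hv : 1 ≤ v)
    (H : Subgroup P) (hHnorm : H.Normal) (hHp : IsPGroup p H)
    (d : P) (hd : orderOf d = q ^ v)
    (hinf : H ⊓ Subgroup.zpowers d = ⊥) (hsup : H ⊔ Subgroup.zpowers d = ⊤)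
    (hdq : d ^ q ∈ Subgroup.center P)
    (hnonnilp : ¬ Group.IsNilpotent P)
    (hcent : ∀ h : P, h ∈ H → h * d = d * h → h ∈ Subgroup.center P)
    (hgen : ∀ h : P, h ∈ H → h * d ≠ d * h → Subgroup.closure {h, d} = ⊤) :
    ∀ N : Subgroup P, N ≠ ⊤ → Group.IsNilpotent N :=
  stmt_12_general p q hp hq hpq v H hHnorm hHp d hd hinf hsup hdq hcent hgen
end

section
/- Let G be a finite group, x an idempotent endomorphism with Im x = ⟨b⟩ cyclic of Sylow q-order q^v, and suppose the set of nontrivial idempotents I₀(G) equals { x·ĝ | g ∈ G } and every nonzero proper endomorphism of G has image isomorphic to a subgroup of C(q^v) (in particular, Im of any nonzero proper endomorphism is a q-group). Then G has no normal subgroup of index p for any prime p ≠ q. -/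
/-- Let `G` be a finite group and `x` an idempotent endomorphism with
`Im x = ⟨b⟩` cyclic of order `q^v`, a Sylow `q`-subgroup of `G`. Suppose the set
of nontrivial idempotents `I₀(G)` equals `{ x·ĝ | g ∈ G }`, and every nonzero
proper (non-automorphism) endomorphism `τ` of `G` lies in `K_G(y)` for some
`y ∈ I₀(G)`. Then `G` has no normal subgroup of index `p` for any prime `p ≠ q`. -/
theorem stmt_14 {G : Type*} [Group G] [Finite G]
    (q : ℕ) (hq : q.Prime) (v : ℕ) (hv : 1 ≤ v)
    (x : G →* G) (hx : x.comp x = x)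
    (b : G) (hb : orderOf b = q ^ v) (hrange : x.range = Subgroup.zpowers b)
    (hsyl : ∃ S : Sylow q G, (S : Subgroup G) = x.range)
    (hI0 : ∀ y : G →* G, y.comp y = y → (∃ a : G, y a ≠ 1) →
      y ≠ MonoidHom.id G →
      ∃ g : G, y = (MulAut.conj g⁻¹).toMonoidHom.comp x)
    (hK : ∀ τ : G →* G, (∃ a : G, τ a ≠ 1) → ¬ Function.Bijective τ →
      ∃ y : G →* G, y.comp y = y ∧ (∃ a : G, y a ≠ 1) ∧ y ≠ MonoidHom.id G ∧
        τ.comp y = τ ∧ y.comp τ = τ) :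
    ∀ p : ℕ, p.Prime → p ≠ q →
      ∀ M : Subgroup G, M.Normal → M.index ≠ p := by
  intro p hp hpq M hM hMind
  haveI : Fact p.Prime := ⟨hp⟩
  haveI := Fintype.ofFinite G
  -- p divides the order of G
  have hpdvd : p ∣ Fintype.card G := by
    have := Subgroup.index_dvd_card (G := G) M
    rw [hMind] at this
    rwa [Nat.card_eq_fintype_card] at this
  -- get an element of order p by Cauchy
  obtain ⟨g, hg⟩ := exists_prime_orderOf_dvd_card p hpdvd
  -- the quotient G⧸M has cardinality p
  have hcardQ : Nat.card (G ⧸ M) = p := by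
    rw [← Subgroup.index_eq_card, hMind]
  have hcardZ : Nat.card (Subgroup.zpowers g) = p := by
    rw [Nat.card_zpowers, hg]
  -- iso between quotient and zpowers g
  let ψ : (G ⧸ M) ≃* Subgroup.zpowers g := mulEquivOfPrimeCardEq hcardQ hcardZ
  let τ : G →* G :=
    (Subgroup.zpowers g).subtype.comp (ψ.toMonoidHom.comp (QuotientGroup.mk' M))
  -- τ is nonzero
  have hMne : M ≠ ⊤ := by
    intro h
    rw [h, Subgroup.index_top] at hMind
    exact hp.one_lt.ne' hMind.symm
  obtain ⟨a, haM⟩ : ∃ a : G, a ∉ M := by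
    by_contra h
    push_neg at h
    exact hMne ((Subgroup.eq_top_iff' M).2 h)
  have hτa : τ a ≠ 1 := by
    intro h
    apply haM
    have h1 : ((Subgroup.zpowers g).subtype) (ψ ((QuotientGroup.mk' M) a)) = 1 := h
    have h2 : ψ ((QuotientGroup.mk' M) a) = 1 := Subtype.ext (by simpa using h1)
    have h3 : (QuotientGroup.mk' M) a = 1 := ψ.injective (by rw [h2, map_one])
    exact (QuotientGroup.eq_one_iff a).mp h3
  -- every element of the range of τ has p-th power 1
  have hpow : ∀ a : G, (τ a) ^ p = 1 := by
    intro a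
    have : (ψ ((QuotientGroup.mk' M) a)) ^ p = 1 := by
      have : ∀ z : Subgroup.zpowers g, z ^ p = 1 := fun z => by
        rw [← hcardZ]; exact pow_card_eq_one'
      exact this _
    calc (τ a) ^ p = ((Subgroup.zpowers g).subtype) ((ψ ((QuotientGroup.mk' M) a)) ^ p) := by
          simp [τ]
      _ = 1 := by rw [this]; simp
  -- τ is not bijective: b is not in the range
  have hτnotbij : ¬ Function.Bijective τ := by
    intro hbij
    obtain ⟨a, hab⟩ := hbij.surjective b
    have : b ^ p = 1 := by rw [← hab]; exact hpow a
    have hdvd : q ^ v ∣ p := hb ▸ orderOf_dvd_of_pow_eq_one this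
    have : q ∣ p := dvd_trans (dvd_pow_self q (Nat.one_le_iff_ne_zero.mp hv)) hdvd
    exact hpq ((Nat.prime_dvd_prime_iff_eq hq hp).mp this).symm
  -- apply hypothesis hK
  obtain ⟨y, hyidem, hyne, hynid, hty, hyt⟩ := hK τ ⟨a, hτa⟩ hτnotbij
  obtain ⟨g₀, hg₀⟩ := hI0 y hyidem hyne hynid
  -- g is in the range of τ
  have hgmem : ∃ a : G, τ a = g := by
    obtain ⟨z, hz⟩ := ψ.surjective ⟨g, Subgroup.mem_zpowers g⟩
    obtain ⟨a, ha⟩ := QuotientGroup.mk'_surjective M z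
    refine ⟨a, ?_⟩
    show ((Subgroup.zpowers g).subtype) (ψ ((QuotientGroup.mk' M) a)) = g
    rw [ha, hz]
    rfl
  obtain ⟨a₀, ha₀⟩ := hgmem
  -- y a₀ has order dividing q ^ v
  have hya : (y a₀) ^ (q ^ v) = 1 := by
    rw [hg₀]
    have hxmem : x a₀ ∈ Subgroup.zpowers b := hrange ▸ ⟨a₀, rfl⟩
    obtain ⟨n, hn⟩ := hxmem
    have hxq : (x a₀) ^ (q ^ v) = 1 := by
      rw [← hn, ← zpow_natCast, ← zpow_mul, mul_comm, zpow_mul, zpow_natCast,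
        ← hb, pow_orderOf_eq_one, one_zpow]
    calc ((MulAut.conj g₀⁻¹).toMonoidHom.comp x a₀) ^ (q ^ v)
        = (MulAut.conj g₀⁻¹).toMonoidHom ((x a₀) ^ (q ^ v)) := by
          simp [map_pow]
      _ = 1 := by rw [hxq]; simp
  -- hence g has order dividing q ^ v, contradiction
  have hgq : g ^ (q ^ v) = 1 := by
    have : τ (y a₀) = g := by
      have := congrArg (fun f : G →* G => f a₀) hty
      simpa [MonoidHom.comp_apply, ha₀] using this
    calc g ^ (q ^ v) = τ ((y a₀) ^ (q ^ v)) := by rw [← this, map_pow]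
      _ = 1 := by rw [hya, map_one]
  have hdvd : p ∣ q ^ v := hg ▸ orderOf_dvd_of_pow_eq_one hgq
  exact hpq (hp.dvd_of_dvd_pow hdvd |> (Nat.prime_dvd_prime_iff_eq hp hq).mp)
end

section
/- Let G be a finite group, S a Sylow p-subgroup of G, and b an element of G of order q^v (p ≠ q primes) such that b^q ∈ Z(G) and the normalizer N_G(S) has order divisible by q^v. Then some conjugate S₁ = gSg⁻¹ of S is normalized by b, and ⟨b, S₁⟩ = S₁ ⋊ ⟨b⟩. -/
/-! Since `|⟨b⟩|` divides `|N_G(S)|`, the normalizer contains a conjugate `g⟨b⟩g⁻¹` of the Sylow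
`q`-subgroup `⟨b⟩`, so `b` normalizes `g⁻¹Sg`; a `p`-group and a `q`-group meet trivially. -/

namespace Sylow

variable {G : Type*} [Group G] [Finite G] {q : ℕ} [Fact q.Prime]

/-- A subgroup of order divisible by `|T|` contains a subgroup of order `|T|`, which is
Sylow and hence conjugate to `T`. -/
theorem exists_smul_le_of_card_dvd (T : Sylow q G) {H : Subgroup G}
    (h : Nat.card T ∣ Nat.card H) : ∃ g : G, ((g • T : Sylow q G) : Subgroup G) ≤ H := by
  rw [T.card_eq_multiplicity] at h
  obtain ⟨K, hK⟩ := Sylow.exists_subgroup_card_pow_prime q h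
  let P : Sylow q G := Sylow.ofCard (K.map H.subtype) <| by
    rw [Subgroup.card_map_of_injective H.subtype_injective, hK]
  obtain ⟨g, hg⟩ := MulAction.exists_smul_eq G T P
  exact ⟨g, hg ▸ Subgroup.map_subtype_le K⟩

theorem exists_le_normalizer_map_conj_of_card_dvd (T : Sylow q G) (H : Subgroup G)
    (h : Nat.card T ∣ Nat.card (Subgroup.normalizer (H : Set G))) :
    ∃ g : G, (T : Subgroup G) ≤
      Subgroup.normalizer ((H.map (MulAut.conj g).toMonoidHom : Subgroup G) : Set G) := by
  obtain ⟨g, hg⟩ := T.exists_smul_le_of_card_dvd h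
  refine ⟨g⁻¹, fun x hx => ?_⟩
  rw [← Subgroup.map_equiv_normalizer_eq]
  exact ⟨g * x * g⁻¹, hg ⟨x, hx, rfl⟩, by simp [mul_assoc]⟩

end Sylow

theorem stmt_15_general {G : Type*} [Group G] [Finite G]
    (p q : ℕ) (hp : p.Prime) (hq : q.Prime) (hpq : p ≠ q)
    (S : Sylow p G) (v : ℕ) (b : G) (hb : orderOf b = q ^ v)
    (hbsyl : ∃ T : Sylow q G, (T : Subgroup G) = Subgroup.zpowers b)
    (hdvd : q ^ v ∣ Nat.card ↥(Subgroup.normalizer ((S : Subgroup G) : Set G))) :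
    ∃ g : G,
      b ∈ Subgroup.normalizer ((Subgroup.map (MulAut.conj g).toMonoidHom (S : Subgroup G) : Subgroup G) : Set G) ∧
      Subgroup.map (MulAut.conj g).toMonoidHom (S : Subgroup G) ⊓
          Subgroup.zpowers b = ⊥ := by
  have : Fact q.Prime := ⟨hq⟩
  obtain ⟨T, hT⟩ := hbsyl
  have hTcard : Nat.card T = q ^ v := by rw [hT, Nat.card_zpowers, hb]
  obtain ⟨g, hg⟩ := T.exists_le_normalizer_map_conj_of_card_dvd S (hTcard ▸ hdvd)
  refine ⟨g, hg (hT ▸ Subgroup.mem_zpowers b), ?_⟩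
  have hT' : IsPGroup q (Subgroup.zpowers b) := hT ▸ T.isPGroup'
  exact (IsPGroup.disjoint_of_coprime (S.isPGroup'.map _) hT'
    ((Nat.coprime_primes hp hq).mpr hpq)).eq_bot

/-- Let `G` be a finite group, `p ≠ q` primes, `S` a Sylow `p`-subgroup, and `b`
an element of order `q^v` with `b^q ∈ Z(G)` and `⟨b⟩` a Sylow `q`-subgroup, such
that `q^v` divides `|N_G(S)|`. Then some conjugate `S₁ = g S g⁻¹` of `S` is
normalized by `b` (so `⟨b, S₁⟩ = S₁ ⋊ ⟨b⟩`). -/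
theorem stmt_15 {G : Type*} [Group G] [Finite G]
    (p q : ℕ) (hp : p.Prime) (hq : q.Prime) (hpq : p ≠ q)
    (S : Sylow p G) (v : ℕ) (hv : 1 ≤ v) (b : G) (hb : orderOf b = q ^ v)
    (hbq : b ^ q ∈ Subgroup.center G)
    (hbsyl : ∃ T : Sylow q G, (T : Subgroup G) = Subgroup.zpowers b)
    (hdvd : q ^ v ∣ Nat.card ↥(Subgroup.normalizer ((S : Subgroup G) : Set G))) :
    ∃ g : G,
      b ∈ Subgroup.normalizer ((Subgroup.map (MulAut.conj g).toMonoidHom (S : Subgroup G) : Subgroup G) : Set G) ∧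
      Subgroup.map (MulAut.conj g).toMonoidHom (S : Subgroup G) ⊓
          Subgroup.zpowers b = ⊥ :=
  stmt_15_general p q hp hq hpq S v b hb hbsyl hdvd
end
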